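/- arXiv:1808.09252 — 6 statements merged into one kernel-verified Lean document; each statement's English description precedes it below -/
import Mathlib

section
/- Let K be a field and σ an automorphism of K with fixed subfield E = {a ∈ K : σ(a) = a}. If a ∈ K is such that the subfield E(σⁿ(a) : n ∈ ℕ) is not finitely generated as a field extension of E, then the set S = { σ^{i₁}(a)·σ^{i₂}(a)⋯σ^{iₙ}(a) : n ≥ 1, 0 ≤ i₁ < i₂ < ⋯ < iₙ } is linearly independent over E. -/
/-!
Write `x n = σⁿ(a)` and `Fₘ = E(x 0, …, x (m - 1))`. If `x m ∈ Fₘ`, then `σ` maps `Fₘ` into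
itself, so `Fₘ` contains every `x n` and `E(x n : n ∈ ℕ) = Fₘ` is finitely generated. Hence
`x m ∉ Fₘ` for all `m`, and this alone forces the square-free monomials in the `x n` to be
independent: those with indices `≤ m` are the monomials `μ` with indices `< m` together with the
`x m * μ`; both families are independent by induction, and their spans meet only in `0` because
the first lies in `Fₘ` while `x m ∉ Fₘ`.
-/

open Finset Submodule IntermediateField

theorem disjoint_span_mul_image {E K : Type*} [Field E] [Field K] [Algebra E K]
    {F : IntermediateField E K} {y : K} (hy : y ∉ F) {s : Set K} (hs : s ⊆ F) :
    Disjoint (span E s) (span E ((y * ·) '' s)) := by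
  have hspan : span E s ≤ F.toSubalgebra.toSubmodule := span_le.mpr hs
  rw [show (y * ·) = LinearMap.mulLeft E y from rfl, span_image, disjoint_def]
  rintro _ hyv ⟨v, hv, rfl⟩
  rcases eq_or_ne v 0 with rfl | hv0
  · exact map_zero _
  · exact (hy (mul_div_cancel_right₀ y hv0 ▸ div_mem (hspan hyv) (hspan hv))).elim

section Monomials

variable {E K : Type*} [Field E] [Field K] [Algebra E K] {x : ℕ → K}

theorem linearIndepOn_prod_powerset_range (hx : ∀ m, x m ∉ adjoin E (x '' Set.Iio m)) (m : ℕ) :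
    LinearIndepOn E (fun S => ∏ i ∈ S, x i) ((range m).powerset : Set (Finset ℕ)) := by
  induction m with
  | zero => simp [linearIndepOn_singleton_iff]
  | succ m ih =>
    set P : Set (Finset ℕ) := ↑(range m).powerset
    have hinsert : ∀ S ∈ P, ∏ i ∈ insert m S, x i = x m * ∏ i ∈ S, x i := fun S hS =>
      prod_insert fun hm => by simpa using mem_powerset.mp hS hm
    have hxm : x m ≠ 0 := fun h => hx m (h ▸ zero_mem _)
    rw [range_add_one, powerset_insert, coe_union, coe_image]
    change LinearIndepOn E _ (P ∪ insert m '' P)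
    refine ih.union ?_ ?_
    · refine LinearIndepOn.image_of_comp _ _
        (ih.map_injOn (LinearMap.mulLeft E (x m)) ?_ |>.congr ?_)
      · exact (mul_right_injective₀ hxm).injOn
      · exact fun S hS => (hinsert S hS).symm
    · have hmem : (fun S => ∏ i ∈ S, x i) '' P ⊆ adjoin E (x '' Set.Iio m) := by
        rintro _ ⟨S, hS, rfl⟩
        exact prod_mem fun i hi => subset_adjoin _ _ ⟨i, by simpa using mem_powerset.mp hS hi, rfl⟩
      have himage : (fun S => ∏ i ∈ S, x i) '' (insert m '' P)
          = (x m * ·) '' ((fun S => ∏ i ∈ S, x i) '' P) := by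
        simp only [Set.image_image]
        exact Set.image_congr hinsert
      rw [himage]
      exact disjoint_span_mul_image (hx m) hmem

theorem linearIndependent_prod_of_notMem_adjoin (hx : ∀ m, x m ∉ adjoin E (x '' Set.Iio m)) :
    LinearIndependent E (fun S : Finset ℕ => ∏ i ∈ S, x i) := by
  have hunion : (⋃ m, ((range m).powerset : Set (Finset ℕ))) = Set.univ :=
    Set.eq_univ_of_forall fun S => Set.mem_iUnion.mpr ⟨S.sup id + 1, mem_powerset.mpr
      fun i hi => mem_range.mpr (Nat.lt_succ_of_le (le_sup (f := id) hi))⟩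
  rw [← linearIndepOn_univ_iff, ← hunion]
  refine linearIndepOn_iUnion_of_directed (Monotone.directed_le fun m n hmn => ?_)
    (linearIndepOn_prod_powerset_range hx)
  exact coe_subset.mpr (powerset_mono.mpr (range_mono hmn))

end Monomials

theorem Subfield.closure_union_range_pow_apply_eq_of_mem {K : Type*} [Field K] (σ : K ≃+* K)
    (E : Subfield K) (hE : ∀ x ∈ E, σ x = x) (a : K) {m : ℕ}
    (hm : (σ ^ m) a ∈ closure ((E : Set K) ∪ (fun n : ℕ => (σ ^ n) a) '' Set.Iio m)) :
    closure ((E : Set K) ∪ Set.range fun n : ℕ => (σ ^ n) a)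
      = closure ((E : Set K) ∪ (fun n : ℕ => (σ ^ n) a) '' Set.Iio m) := by
  set F := closure ((E : Set K) ∪ (fun n : ℕ => (σ ^ n) a) '' Set.Iio m)
  have hsucc : ∀ n, (σ ^ (n + 1)) a = σ ((σ ^ n) a) := fun n => by rw [pow_succ']; rfl
  have hle : ∀ n ≤ m, (σ ^ n) a ∈ F := fun n hn => by
    rcases hn.lt_or_eq with hn | rfl
    · exact subset_closure (Or.inr ⟨n, hn, rfl⟩)
    · exact hm
  have hstable : F ≤ F.comap σ.toRingHom := by
    rw [closure_le]
    rintro _ (hy | ⟨n, hn, rfl⟩)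
    · exact show σ _ ∈ F from (hE _ hy).symm ▸ subset_closure (Or.inl hy)
    · exact show σ _ ∈ F from hsucc n ▸ hle (n + 1) hn
  have hall : ∀ n, (σ ^ n) a ∈ F := by
    intro n
    induction n with
    | zero => exact hle 0 (Nat.zero_le m)
    | succ n ih => exact hsucc n ▸ hstable ih
  refine le_antisymm (closure_le.mpr ?_)
    (closure_mono (Set.union_subset_union_right _ (Set.image_subset_range _ _)))
  rintro _ (hy | ⟨n, rfl⟩)
  · exact subset_closure (Or.inl hy)
  · exact hall n

theorem pow_apply_notMem_adjoin {K : Type*} [Field K] (σ : K ≃+* K)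
    (E : Subfield K) (hE : ∀ x ∈ E, σ x = x) (a : K)
    (hinf : ¬ ∃ s : Finset K,
      Subfield.closure ((E : Set K) ∪ Set.range fun n : ℕ => (σ ^ n) a)
        = Subfield.closure ((E : Set K) ∪ (s : Set K))) (m : ℕ) :
    (σ ^ m) a ∉ adjoin E ((fun n : ℕ => (σ ^ n) a) '' Set.Iio m) := by
  classical
  intro hm
  rw [← mem_toSubfield, adjoin_toSubfield,
    show Set.range (algebraMap E K) = E from Subtype.range_coe] at hm
  refine hinf ⟨(range m).image fun n => (σ ^ n) a, ?_⟩
  rw [coe_image, coe_range, ← Set.Iio_def]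
  exact Subfield.closure_union_range_pow_apply_eq_of_mem σ E hE a hm

theorem stmt1 {K : Type*} [Field K] (σ : K ≃+* K) (E : Subfield K)
    (hE : ∀ x : K, x ∈ E ↔ σ x = x) (a : K)
    (hinf : ¬ ∃ s : Finset K,
      Subfield.closure ((E : Set K) ∪ Set.range fun n : ℕ => (σ ^ n) a)
        = Subfield.closure ((E : Set K) ∪ (s : Set K))) :
    LinearIndependent E
      (fun z : {x : K | ∃ (n : ℕ) (i : Fin (n + 1) → ℕ), StrictMono i ∧
          x = ∏ j, (σ ^ (i j)) a} => (z : K)) := by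
  have hmonomials := linearIndependent_prod_of_notMem_adjoin
    (pow_apply_notMem_adjoin σ E (fun x => (hE x).mp) a hinf)
  refine hmonomials.linearIndepOn_id.mono ?_
  rintro _ ⟨n, i, hi, rfl⟩
  exact ⟨univ.image i, prod_image fun j _ k _ h => hi.injective h⟩
end

section
/- Let K be a field, σ an automorphism of K with fixed field E, and suppose a ∈ K is such that E(σⁿ(a) : n ∈ ℕ) is infinitely generated over E. Fix n ≥ 1 and set yᵢ = σ^i(a)·x^{2n} in K[x,σ] for 0 ≤ i ≤ n. Then the elements y₀, y₁, …, yₙ generate a free E-subalgebra of K[x,σ]; i.e., there is no nonzero noncommutative polynomial F ∈ E⟨z₀,…,zₙ⟩ with F(y₀,…,yₙ) = 0. -/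
/-!
Write `F_M` for the subfield generated over `E` by `a, σ a, …, σ^(M-1) a`. If `σ^m a ∈ F_m` for
some `m`, then `F_m` is `σ`-stable and contains the whole orbit, which is then finitely generated
over `E`; so `σ^m a ∉ F_m` for every `m`.

Since `x^d b = σ^d(b) x^d`, a word `y_{i₁} ⋯ y_{iₖ}` in the `yᵢ = σ^i(a) x^d` equals
`(∏ⱼ σ^(d(j-1) + iⱼ) a) x^(dk)`. The powers of `x` being independent, a relation may be assumed
homogeneous of some length `k`. Grouping its words by their last letter `i` gives a relation
`∑ᵢ eᵢ σ^(d(k-1)+i)(a) = 0` with `eᵢ ∈ F_{d(k-1)}` as long as every letter is smaller than `d`;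
the largest `i` with `eᵢ ≠ 0` would put `σ^(d(k-1)+i) a` into `F_{d(k-1)+i}`. Hence all `eᵢ`
vanish, and induction on `k` finishes the proof.
-/

open Finset

section

variable {K : Type*} [Field K]

section SkewWord

variable {ι : Type*} (σ : K ≃+* K) (d : ℕ) (b : ι → K)

def skewWordProd : List ι → K
  | [] => 1
  | i :: l => b i * (σ ^ d) (skewWordProd l)

@[simp]
lemma skewWordProd_nil : skewWordProd σ d b [] = 1 := rfl

@[simp]
lemma skewWordProd_cons (i : ι) (l : List ι) :
    skewWordProd σ d b (i :: l) = b i * (σ ^ d) (skewWordProd σ d b l) := rfl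

lemma skewWordProd_append (l₁ l₂ : List ι) :
    skewWordProd σ d b (l₁ ++ l₂) =
      skewWordProd σ d b l₁ * (σ ^ (d * l₁.length)) (skewWordProd σ d b l₂) := by
  induction l₁ with
  | nil => simp
  | cons i l ih =>
    rw [List.cons_append, skewWordProd_cons, skewWordProd_cons, ih, map_mul, mul_assoc,
      List.length_cons, Nat.mul_succ, add_comm, pow_add, RingAut.mul_apply]

lemma skewWordProd_concat (l : List ι) (i : ι) :
    skewWordProd σ d b (l ++ [i]) = skewWordProd σ d b l * (σ ^ (d * l.length)) (b i) := by
  rw [skewWordProd_append, skewWordProd_cons, skewWordProd_nil, map_one, mul_one]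

lemma sum_image_dropLast_filter_getLast? [DecidableEq ι] {M : Type*} [AddCommMonoid M]
    (s : Finset (List ι)) (i : ι) (g : List ι → List ι → M) :
    ∑ t ∈ (s.filter (·.getLast? = some i)).image List.dropLast, g (t ++ [i]) t =
      ∑ l ∈ s with l.getLast? = some i, g l l.dropLast := by
  have hsnoc : ∀ l ∈ s.filter (·.getLast? = some i), l.dropLast ++ [i] = l :=
    fun l hl => List.dropLast_append_getLast? i (mem_filter.1 hl).2
  rw [sum_image fun l₁ h₁ l₂ h₂ h => by rw [← hsnoc l₁ h₁, ← hsnoc l₂ h₂, h]]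
  exact sum_congr rfl fun l hl => by rw [hsnoc l hl]

lemma sum_mul_skewWordProd_eq_sum_getLast? [Fintype ι] [DecidableEq ι] {k : ℕ}
    (s : Finset (List ι)) (hlen : ∀ l ∈ s, l.length = k + 1) (c : List ι → K) :
    ∑ l ∈ s, c l * skewWordProd σ d b l =
      ∑ i, (∑ l ∈ s with l.getLast? = some i, c l * skewWordProd σ d b l.dropLast) *
        (σ ^ (d * k)) (b i) := by
  rw [← sum_fiberwise s List.getLast?, Fintype.sum_option, sum_eq_zero (s := s.filter _), zero_add]
  · refine sum_congr rfl fun i _ => ?_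
    rw [sum_mul]
    refine sum_congr rfl fun l hl => ?_
    obtain ⟨hl, hi⟩ := mem_filter.1 hl
    have hsnoc := congrArg (skewWordProd σ d b) (List.dropLast_append_getLast? i hi)
    rw [skewWordProd_concat, List.length_dropLast, hlen l hl, Nat.add_sub_cancel] at hsnoc
    rw [← hsnoc, mul_assoc]
  · intro l hl
    obtain ⟨hl, hnone⟩ := mem_filter.1 hl
    rw [List.getLast?_eq_none_iff] at hnone
    simpa [hnone] using hlen l hl

variable {R : Type*} [Ring R] (f : K →+* R) (x : R)

lemma pow_mul_map_of_skew (hskew : ∀ z : K, x * f z = f (σ z) * x) (k : ℕ) (z : K) :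
    x ^ k * f z = f ((σ ^ k) z) * x ^ k := by
  induction k generalizing z with
  | zero => simp
  | succ k ih =>
    rw [pow_succ, mul_assoc, hskew, ← mul_assoc, ih, mul_assoc, pow_succ σ, RingAut.mul_apply]

lemma prod_map_mul_pow_eq_skewWordProd (hskew : ∀ z : K, x * f z = f (σ z) * x)
    (l : List ι) :
    (l.map fun i => f (b i) * x ^ d).prod = f (skewWordProd σ d b l) * x ^ (d * l.length) := by
  induction l with
  | nil => simp
  | cons i l ih =>
    rw [List.map_cons, List.prod_cons, ih, mul_assoc, ← mul_assoc (x ^ d),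
      pow_mul_map_of_skew σ f x hskew, skewWordProd_cons, map_mul, List.length_cons, Nat.mul_succ,
      add_comm, pow_add]
    simp only [mul_assoc]

end SkewWord

lemma sum_filter_eq_zero_of_sum_mul_pow_eq_zero {R : Type*} [Ring R] (f : K →+* R) (x : R)
    (hbasis : ∀ (m : ℕ) (g : ℕ → K),
      (∑ i ∈ range m, f (g i) * x ^ i) = 0 → ∀ i < m, g i = 0)
    {ι : Type*} (s : Finset ι) (g : ι → K) (deg : ι → ℕ)
    (h : ∑ l ∈ s, f (g l) * x ^ deg l = 0) (j : ℕ) :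
    ∑ l ∈ s with deg l = j, g l = 0 := by
  set N := s.sup deg + j + 1
  refine hbasis N (fun j => ∑ l ∈ s with deg l = j, g l) ?_ j (by omega)
  have hdeg : ∀ l ∈ s, deg l ∈ range N := fun l hl =>
    mem_range.2 (by have := le_sup (f := deg) hl; omega)
  rw [← h, ← sum_fiberwise_of_maps_to hdeg]
  refine sum_congr rfl fun j _ => ?_
  rw [map_sum, sum_mul]
  exact sum_congr rfl fun l hl => by rw [(mem_filter.1 hl).2]

section OrbitField

variable (σ : K ≃+* K) (E : Subfield K) (a : K)

def orbitField (M : ℕ) : Subfield K :=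
  Subfield.closure ((E : Set K) ∪ (fun j => (σ ^ j) a) '' Set.Iio M)

variable {σ E a}

lemma mem_orbitField_of_mem {z : K} (hz : z ∈ E) (M : ℕ) : z ∈ orbitField σ E a M :=
  Subfield.subset_closure (Or.inl hz)

lemma pow_apply_mem_orbitField {j M : ℕ} (hj : j < M) : (σ ^ j) a ∈ orbitField σ E a M :=
  Subfield.subset_closure (Or.inr ⟨j, hj, rfl⟩)

lemma orbitField_mono : Monotone (orbitField σ E a) := fun _ _ h =>
  Subfield.closure_mono (Set.union_subset_union_right _ (Set.image_mono (Set.Iio_subset_Iio h)))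

lemma pow_apply_mem_orbitField_add (hE : ∀ z ∈ E, σ z = z) {z : K} {M : ℕ}
    (hz : z ∈ orbitField σ E a M) (r : ℕ) :
    (σ ^ r) z ∈ orbitField σ E a (M + r) := by
  suffices orbitField σ E a M ≤ (orbitField σ E a (M + r)).comap (σ ^ r : K ≃+* K).toRingHom from
    this hz
  refine Subfield.closure_le.2 ?_
  rintro z (hz | ⟨j, hj, rfl⟩)
  · show (σ ^ r) z ∈ orbitField σ E a (M + r)
    rw [RingAut.coe_pow, (Function.IsFixedPt.iterate (hE z hz) r).eq]
    exact mem_orbitField_of_mem hz _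
  · show (σ ^ r) ((σ ^ j) a) ∈ orbitField σ E a (M + r)
    rw [← RingAut.mul_apply, ← pow_add]
    exact pow_apply_mem_orbitField (by rw [Set.mem_Iio] at hj; omega)

lemma exists_finset_closure_eq_of_pow_apply_mem (hE : ∀ z ∈ E, σ z = z) {m : ℕ}
    (hm : (σ ^ m) a ∈ orbitField σ E a m) :
    ∃ s : Finset K,
      Subfield.closure ((E : Set K) ∪ Set.range fun n : ℕ => (σ ^ n) a)
        = Subfield.closure ((E : Set K) ∪ (s : Set K)) := by
  classical
  have hsucc : orbitField σ E a (m + 1) ≤ orbitField σ E a m := by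
    refine Subfield.closure_le.2 ?_
    rintro z (hz | ⟨j, hj, rfl⟩)
    · exact mem_orbitField_of_mem hz m
    · rcases Nat.lt_succ_iff_lt_or_eq.1 hj with hj | rfl
      exacts [pow_apply_mem_orbitField hj, hm]
  have horbit : ∀ j, (σ ^ j) a ∈ orbitField σ E a m := by
    intro j
    induction j with
    | zero =>
      rcases Nat.eq_zero_or_pos m with rfl | hm0
      exacts [hm, pow_apply_mem_orbitField hm0]
    | succ j ih =>
      rw [pow_succ', RingAut.mul_apply]
      exact hsucc (by simpa using pow_apply_mem_orbitField_add hE ih 1)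
  refine ⟨(range m).image fun j => (σ ^ j) a, ?_⟩
  rw [coe_image, coe_range]
  refine le_antisymm (Subfield.closure_le.2 ?_) (Subfield.closure_mono
    (Set.union_subset_union_right _ (Set.image_subset_range _ _)))
  rintro z (hz | ⟨j, rfl⟩)
  exacts [mem_orbitField_of_mem hz m, horbit j]

lemma pow_apply_notMem_orbitField (hE : ∀ z ∈ E, σ z = z)
    (hinf : ¬ ∃ s : Finset K,
      Subfield.closure ((E : Set K) ∪ Set.range fun n : ℕ => (σ ^ n) a)
        = Subfield.closure ((E : Set K) ∪ (s : Set K)))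
    (m : ℕ) : (σ ^ m) a ∉ orbitField σ E a m :=
  fun hm => hinf (exists_finset_closure_eq_of_pow_apply_mem hE hm)

lemma eq_zero_of_sum_mul_pow_apply_eq_zero (hnew : ∀ m, (σ ^ m) a ∉ orbitField σ E a m)
    (q : ℕ) : ∀ (N : ℕ) (e : Fin N → K), (∀ i, e i ∈ orbitField σ E a q) →
      ∑ i, e i * (σ ^ (q + i)) a = 0 → ∀ i, e i = 0 := by
  intro N
  induction N with
  | zero => exact fun _ _ _ i => i.elim0
  | succ N ih =>
    intro e he hsum
    simp only [Fin.sum_univ_castSucc, Fin.val_castSucc, Fin.val_last] at hsum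
    have hlast : e (Fin.last N) = 0 := by
      by_contra hne
      apply hnew (q + N)
      have hsolve : (σ ^ (q + N)) a =
          (e (Fin.last N))⁻¹ * -∑ i : Fin N, e i.castSucc * (σ ^ (q + i)) a := by
        rw [add_eq_zero_iff_neg_eq.1 hsum, inv_mul_cancel_left₀ hne]
      rw [hsolve]
      refine mul_mem (inv_mem (orbitField_mono (by omega) (he _)))
        (neg_mem (sum_mem fun i _ => mul_mem (orbitField_mono (by omega) (he _)) ?_))
      exact pow_apply_mem_orbitField (by omega)
    rw [hlast, zero_mul, add_zero] at hsum
    intro i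
    induction i using Fin.lastCases with
    | last => exact hlast
    | cast i => exact ih (fun i => e i.castSucc) (fun i => he _) hsum i

lemma skewWordProd_mem_orbitField (hE : ∀ z ∈ E, σ z = z) {m d : ℕ} (hmd : m ≤ d)
    (l : List (Fin m)) :
    skewWordProd σ d (fun i : Fin m => (σ ^ (i : ℕ)) a) l ∈ orbitField σ E a (d * l.length) := by
  induction l with
  | nil => exact one_mem _
  | cons i l ih =>
    rw [skewWordProd_cons, List.length_cons, Nat.mul_succ]
    exact mul_mem (pow_apply_mem_orbitField (by have := i.isLt; nlinarith))
      (pow_apply_mem_orbitField_add hE ih d)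

end OrbitField

theorem eq_zero_of_sum_mul_skewWordProd_eq_zero {σ : K ≃+* K} {E : Subfield K} {a : K}
    (hE : ∀ z ∈ E, σ z = z) (hnew : ∀ m, (σ ^ m) a ∉ orbitField σ E a m) {m d : ℕ}
    (hmd : m ≤ d) (k : ℕ) :
    ∀ (s : Finset (List (Fin m))) (c : List (Fin m) → K), (∀ l ∈ s, l.length = k) →
      (∀ l, c l ∈ E) →
      ∑ l ∈ s, c l * skewWordProd σ d (fun i : Fin m => (σ ^ (i : ℕ)) a) l = 0 →
      ∀ l ∈ s, c l = 0 := by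
  induction k with
  | zero =>
    intro s c hlen _ hsum l hl
    have hnil : ∀ l ∈ s, l = [] := fun l hl => List.length_eq_zero_iff.1 (hlen l hl)
    obtain rfl := hnil l hl
    rw [sum_eq_single_of_mem [] hl fun l' hl' hne => (hne (hnil l' hl')).elim] at hsum
    simpa using hsum
  | succ k ih =>
    intro s c hlen hcE hsum
    rw [sum_mul_skewWordProd_eq_sum_getLast? σ d _ s hlen] at hsum
    simp only [← RingAut.mul_apply, ← pow_add] at hsum
    have hlen' : ∀ l ∈ s, ∀ i, l.getLast? = some i → l.dropLast.length = k := fun l hl _ _ => by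
      rw [List.length_dropLast, hlen l hl, Nat.add_sub_cancel]
    have hfiber : ∀ i, ∑ l ∈ s with l.getLast? = some i,
        c l * skewWordProd σ d (fun i : Fin m => (σ ^ (i : ℕ)) a) l.dropLast = 0 := by
      refine eq_zero_of_sum_mul_pow_apply_eq_zero hnew (d * k) m _ (fun i => ?_) hsum
      refine sum_mem fun l hl => mul_mem (mem_orbitField_of_mem (hcE l) _) ?_
      obtain ⟨hl, hi⟩ := mem_filter.1 hl
      rw [← hlen' l hl i hi]
      exact skewWordProd_mem_orbitField hE hmd _
    intro l hl
    obtain ⟨i, hi⟩ : ∃ i, l.getLast? = some i := Option.isSome_iff_exists.1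
      (List.getLast?_isSome.2 (List.ne_nil_of_length_eq_add_one (hlen l hl)))
    have := ih _ (fun t => c (t ++ [i])) ?_ (fun t => hcE _)
      ((sum_image_dropLast_filter_getLast? s i fun l t => c l * _).trans (hfiber i)) l.dropLast
      (mem_image_of_mem _ (mem_filter.2 ⟨hl, hi⟩))
    · rwa [List.dropLast_append_getLast? i hi] at this
    · simp only [mem_image, mem_filter]
      rintro t ⟨l', ⟨hl', hi'⟩, rfl⟩
      exact hlen' l' hl' _ hi'

end

theorem stmt8_general {K R : Type*} [Field K] [Ring R] (σ : K ≃+* K)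
    (f : K →+* R) (x : R)
    (hskew : ∀ b : K, x * f b = f (σ b) * x)
    (hbasis : ∀ (m : ℕ) (g : ℕ → K),
      (∑ i ∈ Finset.range m, f (g i) * x ^ i) = 0 → ∀ i < m, g i = 0)
    (E : Subfield K) (hE : ∀ z : K, z ∈ E ↔ σ z = z) (a : K)
    (hinf : ¬ ∃ s : Finset K,
      Subfield.closure ((E : Set K) ∪ Set.range fun n : ℕ => (σ ^ n) a)
        = Subfield.closure ((E : Set K) ∪ (s : Set K)))
    (n : ℕ) (hn : 1 ≤ n)
    (y : Fin (n + 1) → R) (hy : ∀ i, y i = f ((σ ^ (i : ℕ)) a) * x ^ (2 * n)) :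
    ∀ (s : Finset (List (Fin (n + 1)))) (c : List (Fin (n + 1)) → K),
      (∀ l, c l ∈ E) →
      (∑ l ∈ s, f (c l) * (l.map y).prod) = 0 →
      ∀ l ∈ s, c l = 0 := by
  intro s c hcE hsum l₀ hl₀
  have hσE : ∀ z ∈ E, σ z = z := fun z hz => (hE z).1 hz
  set P := skewWordProd σ (2 * n) fun i : Fin (n + 1) => (σ ^ (i : ℕ)) a
  have hgraded : ∑ l ∈ s, f (c l * P l) * x ^ (2 * n * l.length) = 0 := by
    simpa only [funext hy, prod_map_mul_pow_eq_skewWordProd σ _ _ f x hskew, map_mul,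
      mul_assoc] using hsum
  have hlen := sum_filter_eq_zero_of_sum_mul_pow_eq_zero f x hbasis s _ _ hgraded
    (2 * n * l₀.length)
  rw [filter_congr fun l _ => Nat.mul_right_inj (by omega : 2 * n ≠ 0)] at hlen
  exact eq_zero_of_sum_mul_skewWordProd_eq_zero hσE (pow_apply_notMem_orbitField hσE hinf)
    (by omega) l₀.length _ c (fun l hl => (mem_filter.1 hl).2) hcE hlen l₀ (mem_filter.2 ⟨hl₀, rfl⟩)

/-- Abstract setting for the skew polynomial ring `K[x,σ]`: a ring `R` containing `K`
via `f`, with `x` satisfying the skew relation, such that the powers of `x` are left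
linearly independent over `K`.  If `E(σⁿ(a) : n)` is infinitely generated over the
fixed field `E`, then the elements `yᵢ = σ^i(a) x^{2n}`, `0 ≤ i ≤ n`, generate a free
`E`-algebra: the monomials in the `yᵢ` are left `E`-linearly independent. -/
theorem stmt8 {K R : Type*} [Field K] [Ring R] (σ : K ≃+* K)
    (f : K →+* R) (hf : Function.Injective f) (x : R)
    (hskew : ∀ b : K, x * f b = f (σ b) * x)
    (hbasis : ∀ (m : ℕ) (g : ℕ → K),
      (∑ i ∈ Finset.range m, f (g i) * x ^ i) = 0 → ∀ i < m, g i = 0)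
    (E : Subfield K) (hE : ∀ z : K, z ∈ E ↔ σ z = z) (a : K)
    (hinf : ¬ ∃ s : Finset K,
      Subfield.closure ((E : Set K) ∪ Set.range fun n : ℕ => (σ ^ n) a)
        = Subfield.closure ((E : Set K) ∪ (s : Set K)))
    (n : ℕ) (hn : 1 ≤ n)
    (y : Fin (n + 1) → R) (hy : ∀ i, y i = f ((σ ^ (i : ℕ)) a) * x ^ (2 * n)) :
    ∀ (s : Finset (List (Fin (n + 1)))) (c : List (Fin (n + 1)) → K),
      (∀ l, c l ∈ E) →
      (∑ l ∈ s, f (c l) * (l.map y).prod) = 0 →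
      ∀ l ∈ s, c l = 0 :=
  stmt8_general σ f x hskew hbasis E hE a hinf n hn y hy
end

section
/- Let K be a field of characteristic p > 0, σ an automorphism of K, and y an element of the skew power series ring K[[x,σ]] of positive order (all terms of degree ≥ 1 in x). For any nonzero integer j write j = p^λ j₁ with gcd(p, j₁) = 1. Then (1 + y)^j = 1 + j₁ y^{p^λ} + (terms of order strictly greater than p^λ · ord(y)), where ord denotes the least degree of a nonzero term. -/
/-!
Because `x` normalizes `R`, each right ideal `x^m R` is two-sided and
`x^m R · x^n R ⊆ x^(m+n) R`. In characteristic `p`, `(1 + y)^(p^λ) = 1 + z` with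
`z = y^(p^λ) ∈ x^(e p^λ) R`, so `(1 + y)^j = (1 + z)^j₁`. Modulo `x^(e p^λ + 1) R` the element `z`
squares to zero, and `(1 + ε)^k = 1 + k ε` for every integer `k` whenever `ε² = 0`.
-/

section SquareZero

variable {R : Type*} [Ring R] {ε : R}

theorem one_add_intCast_mul_mul_of_mul_self_eq_zero (hε : ε * ε = 0) (a b : ℤ) :
    (1 + a * ε) * (1 + b * ε) = 1 + (a + b : ℤ) * ε := by
  have hcross : (a : R) * ε * ((b : R) * ε) = 0 := by
    rw [mul_assoc, ← mul_assoc ε, ← (Int.cast_commute b ε).eq, mul_assoc, hε, mul_zero,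
      mul_zero]
  simp only [mul_add, add_mul, one_mul, mul_one, hcross, Int.cast_add]
  abel

theorem Units.val_zpow_of_val_eq_one_add (hε : ε * ε = 0) {v : Rˣ} (hv : (v : R) = 1 + ε)
    (j : ℤ) : ((v ^ j : Rˣ) : R) = 1 + j * ε := by
  have hv' : (v : R) = 1 + ((1 : ℤ) : R) * ε := by rw [hv, Int.cast_one, one_mul]
  have hinv : ((v⁻¹ : Rˣ) : R) = 1 + ((-1 : ℤ) : R) * ε := by
    refine Units.inv_eq_of_mul_eq_one_right ?_
    rw [hv', one_add_intCast_mul_mul_of_mul_self_eq_zero hε]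
    simp
  induction j using Int.induction_on with
  | zero => simp
  | succ i ih =>
    rw [zpow_add_one, Units.val_mul, ih, hv', one_add_intCast_mul_mul_of_mul_self_eq_zero hε]
  | pred i ih =>
    rw [zpow_sub_one, Units.val_mul, ih, hinv, one_add_intCast_mul_mul_of_mul_self_eq_zero hε,
      sub_eq_add_neg]

end SquareZero

namespace TwoSidedIdeal

variable {R : Type*} [Ring R]

theorem val_zpow_sub_one_add_mem (I : TwoSidedIdeal R) {v : Rˣ} {z : R} (hv : (v : R) = 1 + z)
    (hz : z * z ∈ I) (j : ℤ) : ((v ^ j : Rˣ) : R) - (1 + j * z) ∈ I := by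
  let π := I.ringCon.mk'
  have hπz : π z * π z = 0 := by
    rw [← map_mul, ← map_zero π]
    exact (RingCon.eq _).2 ((I.rel_iff _ _).2 (by rwa [sub_zero]))
  have hπv : ((Units.map π.toMonoidHom v : I.ringCon.Quotientˣ) : I.ringCon.Quotient) =
      1 + π z := by
    simp [hv]
  rw [← rel_iff, ← RingCon.eq]
  change π _ = π _
  rw [map_add, map_one, map_mul, map_intCast, ← Units.val_zpow_of_val_eq_one_add hπz hπv j,
    ← map_zpow, Units.coe_map]
  rfl

end TwoSidedIdeal

section Normalizing

variable {R : Type*} [Ring R] {x : R}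

theorem exists_mul_pow_eq_pow_mul (hx : ∀ r : R, ∃ r', r * x = x * r') (r : R) (k : ℕ) :
    ∃ r', r * x ^ k = x ^ k * r' := by
  induction k generalizing r with
  | zero => exact ⟨r, by simp⟩
  | succ k ih =>
    obtain ⟨r₁, hr₁⟩ := hx r
    obtain ⟨r₂, hr₂⟩ := ih r₁
    exact ⟨r₂, by rw [pow_succ', ← mul_assoc, hr₁, mul_assoc, hr₂, mul_assoc]⟩

def powMulIdeal (hx : ∀ r : R, ∃ r', r * x = x * r') (m : ℕ) : TwoSidedIdeal R :=
  .mk' {r | ∃ s, r = x ^ m * s} ⟨0, (mul_zero _).symm⟩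
    (by rintro _ _ ⟨s, rfl⟩ ⟨t, rfl⟩; exact ⟨s + t, (mul_add _ _ _).symm⟩)
    (by rintro _ ⟨s, rfl⟩; exact ⟨-s, (mul_neg _ _).symm⟩)
    (by
      rintro r _ ⟨s, rfl⟩
      obtain ⟨r', hr'⟩ := exists_mul_pow_eq_pow_mul hx r m
      exact ⟨r' * s, by rw [← mul_assoc, hr', mul_assoc]⟩)
    (by rintro _ t ⟨s, rfl⟩; exact ⟨s * t, mul_assoc _ _ _⟩)

variable (hx : ∀ r : R, ∃ r', r * x = x * r')

theorem mem_powMulIdeal {m : ℕ} {r : R} : r ∈ powMulIdeal hx m ↔ ∃ s, r = x ^ m * s :=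
  TwoSidedIdeal.mem_mk' ..

theorem powMulIdeal_antitone : Antitone (powMulIdeal hx) := by
  intro m n hmn r hr
  obtain ⟨s, rfl⟩ := (mem_powMulIdeal hx).1 hr
  exact (mem_powMulIdeal hx).2
    ⟨x ^ (n - m) * s, by rw [← mul_assoc, ← pow_add, Nat.add_sub_cancel' hmn]⟩

theorem mul_mem_powMulIdeal {m n : ℕ} {a b : R} (ha : a ∈ powMulIdeal hx m)
    (hb : b ∈ powMulIdeal hx n) : a * b ∈ powMulIdeal hx (m + n) := by
  obtain ⟨s, rfl⟩ := (mem_powMulIdeal hx).1 ha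
  obtain ⟨t, rfl⟩ := (mem_powMulIdeal hx).1 hb
  obtain ⟨s', hs'⟩ := exists_mul_pow_eq_pow_mul hx s n
  exact (mem_powMulIdeal hx).2
    ⟨s' * t, by rw [mul_assoc, ← mul_assoc s, hs', pow_add, mul_assoc, mul_assoc]⟩

theorem pow_mem_powMulIdeal {m : ℕ} {a : R} (ha : a ∈ powMulIdeal hx m) (n : ℕ) :
    a ^ n ∈ powMulIdeal hx (m * n) := by
  induction n with
  | zero => exact (mem_powMulIdeal hx).2 ⟨1, by simp⟩
  | succ n ih => simpa only [pow_succ, mul_add_one] using mul_mem_powMulIdeal hx ih ha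

end Normalizing

theorem stmt10_general {R : Type*} [Ring R] (p : ℕ) (hp : p.Prime) [CharP R p]
    (x : R) (hxnorm : ∀ r : R, ∃ r' : R, r * x = x * r')
    (e : ℕ) (he : 1 ≤ e) (y : R) (hy : ∃ s₀ : R, y = x ^ e * s₀)
    (u : Rˣ) (hu : (u : R) = 1 + y)
    (j : ℤ) (lam : ℕ) (j₁ : ℤ)
    (hfact : j = (p : ℤ) ^ lam * j₁) :
    ∃ s : R, ((u ^ j : Rˣ) : R) = 1 + (j₁ : R) * y ^ (p ^ lam) + x ^ (e * p ^ lam + 1) * s := by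
  have : Fact p.Prime := ⟨hp⟩
  set m := e * p ^ lam
  have hm : 1 ≤ m :=
    Nat.one_le_iff_ne_zero.2 (Nat.mul_ne_zero (by omega) (pow_ne_zero _ hp.ne_zero))
  have hz : y ^ p ^ lam ∈ powMulIdeal hxnorm m :=
    pow_mem_powMulIdeal hxnorm ((mem_powMulIdeal hxnorm).2 hy) _
  have hzz : y ^ p ^ lam * y ^ p ^ lam ∈ powMulIdeal hxnorm (m + 1) :=
    powMulIdeal_antitone hxnorm (by omega) (mul_mem_powMulIdeal hxnorm hz hz)
  have hfrob : ((u ^ p ^ lam : Rˣ) : R) = 1 + y ^ p ^ lam := by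
    rw [Units.val_pow_eq_pow_val, hu, add_pow_char_pow_of_commute p lam (Commute.one_left y),
      one_pow]
  have hsplit : u ^ j = (u ^ p ^ lam) ^ j₁ := by
    rw [hfact, zpow_mul, ← Nat.cast_pow, zpow_natCast]
  obtain ⟨s, hs⟩ := (mem_powMulIdeal hxnorm).1
    ((powMulIdeal hxnorm (m + 1)).val_zpow_sub_one_add_mem hfrob hzz j₁)
  exact ⟨s, by rw [hsplit, ← hs, add_sub_cancel]⟩

/-- Abstract setting for the skew power series ring `K[[x,σ]]` in characteristic
`p > 0`: a ring `R` of characteristic `p` with an element `x` normalizing `R`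
(`R x ⊆ x R`), and `y` of order `≥ e ≥ 1` (i.e. `y ∈ x^e R`).  Writing a nonzero
integer `j = p^λ j₁` with `p ∤ j₁`, one has
`(1+y)^j = 1 + j₁ y^{p^λ} + (terms of order > p^λ e)`. -/
theorem stmt10 {K R : Type*} [Field K] [Ring R] (p : ℕ) (hp : p.Prime) [CharP R p]
    (σ : K ≃+* K) (f : K →+* R) (hf : Function.Injective f)
    (x : R) (hskew : ∀ b : K, x * f b = f (σ b) * x) (hxnorm : ∀ r : R, ∃ r' : R, r * x = x * r')
    (e : ℕ) (he : 1 ≤ e) (y : R) (hy : ∃ s₀ : R, y = x ^ e * s₀)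
    (u : Rˣ) (hu : (u : R) = 1 + y)
    (j : ℤ) (hj : j ≠ 0) (lam : ℕ) (j₁ : ℤ)
    (hfact : j = (p : ℤ) ^ lam * j₁) (hcop : ¬ (p : ℤ) ∣ j₁) :
    ∃ s : R, ((u ^ j : Rˣ) : R) = 1 + (j₁ : R) * y ^ (p ^ lam) + x ^ (e * p ^ lam + 1) * s :=
  stmt10_general p hp x hxnorm e he y hy u hu j lam j₁ hfact
end

section
/- Let D be a division ring and a, b ∈ D noncommuting elements such that c = b⁻¹ a b commutes with a. Let K be a commutative subring of D containing a and c, and let M = K + bK be the right K-submodule of D generated by {1, b}. Then M is a free right K-module with basis {1, b}. -/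
/-! Conjugation gives `a b = b c`. Multiplying `s + b t = 0` on the left by `a` and moving `a`
past `b` turns `a b t` into `b c t = b t c = -s c`, so `s a = a s = s c`. Since `a b ≠ b a` forces
`c ≠ a` and `b ≠ 0`, the absence of zero divisors gives `s = 0` and then `t = 0`. -/

theorem mul_eq_mul_of_eq_inv_mul_mul {G₀ : Type*} [GroupWithZero G₀] {a b c : G₀} (hb : b ≠ 0)
    (hc : c = b⁻¹ * a * b) : a * b = b * c := by
  rw [hc, ← mul_assoc, ← mul_assoc, mul_inv_cancel₀ hb, one_mul]

section Ring

variable {R : Type*} [Ring R] {a b c s t : R}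

theorem mul_sub_eq_zero_of_add_mul_eq_zero (habc : a * b = b * c) (hs : a * s = s * a)
    (ht : t * c = c * t) (h : s + b * t = 0) : s * (c - a) = 0 := by
  have hbt : b * t = -s := eq_neg_of_add_eq_zero_right h
  have hsc : s * c = s * a :=
    calc s * c = -(b * t * c) := by rw [hbt, neg_mul, neg_neg]
      _ = -(a * (b * t)) := by rw [mul_assoc, ht, ← mul_assoc, ← habc, mul_assoc]
      _ = s * a := by rw [hbt, mul_neg, neg_neg, hs]
  rw [mul_sub, hsc, sub_self]

theorem eq_zero_and_eq_zero_of_add_mul_eq_zero [NoZeroDivisors R] (habc : a * b = b * c)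
    (hca : c ≠ a) (hb : b ≠ 0) (hs : a * s = s * a) (ht : t * c = c * t) (h : s + b * t = 0) :
    s = 0 ∧ t = 0 := by
  have hs0 : s = 0 :=
    (mul_eq_zero.mp (mul_sub_eq_zero_of_add_mul_eq_zero habc hs ht h)).resolve_right
      (sub_ne_zero.mpr hca)
  refine ⟨hs0, (mul_eq_zero.mp ?_).resolve_left hb⟩
  rwa [hs0, zero_add] at h

end Ring

theorem stmt13_general {D : Type*} [DivisionRing D] (a b : D)
    (hab : a * b ≠ b * a) (c : D) (hc : c = b⁻¹ * a * b)
    (K : Subring D) (hK : ∀ x ∈ K, ∀ y ∈ K, x * y = y * x)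
    (haK : a ∈ K) (hcK : c ∈ K) :
    ∀ s t : D, s ∈ K → t ∈ K → 1 * s + b * t = 0 → s = 0 ∧ t = 0 := by
  intro s t hs ht h
  have hb : b ≠ 0 := by
    rintro rfl
    simp at hab
  have habc : a * b = b * c := mul_eq_mul_of_eq_inv_mul_mul hb hc
  have hca : c ≠ a := by
    rintro rfl
    exact hab habc
  rw [one_mul] at h
  exact eq_zero_and_eq_zero_of_add_mul_eq_zero habc hca hb (hK a haK s hs) (hK t ht c hcK) h

/-- In a division ring `D`, if `a, b` do not commute, `c = b⁻¹ a b` commutes with `a`,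
and `K` is a commutative subring containing `a` and `c`, then `M = K + bK` is a free
right `K`-module on the basis `{1, b}`: a relation `s + b t = 0` with `s, t ∈ K`
forces `s = t = 0`. -/
theorem stmt13 {D : Type*} [DivisionRing D] (a b : D)
    (hab : a * b ≠ b * a) (c : D) (hc : c = b⁻¹ * a * b) (hac : a * c = c * a)
    (K : Subring D) (hK : ∀ x ∈ K, ∀ y ∈ K, x * y = y * x)
    (haK : a ∈ K) (hcK : c ∈ K) :
    ∀ s t : D, s ∈ K → t ∈ K → 1 * s + b * t = 0 → s = 0 ∧ t = 0 :=
  stmt13_general a b hab c hc K hK haK hcK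
end

section
/- Let D be a division ring, K a subfield of D, and a ∈ D an element with a K a⁻¹ = K such that a is algebraic over the center F of D with F ⊆ K. Then the subring L = Σ_{i∈ℕ} K aⁱ of D is contained in Σ_{i=0}^m K aⁱ for some m, L is a division subring of D, and L is a finite-dimensional left vector space over K. -/
/-!
Since `F ⊆ K` and `a` is integral over `F`, every power of `a` is a left `F`-, hence `K`-,
combination of `1, a, …, a ^ (n - 1)`, where `n` is the degree of the minimal polynomial. As
`a K ⊆ K a`, the left `K`-span of the powers of `a` is closed under multiplication, so it is a
subring of `D` that is finite-dimensional as a left `K`-space. Right multiplication by a nonzero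
element of it is then an injective, hence surjective, `K`-linear endomorphism, which yields inverses.
-/

section

open Submodule

variable {D : Type*} [DivisionRing D]

namespace Subfield

variable (K : Subfield D)

def semiNormalizer : Submonoid D where
  carrier := {m | ∀ k ∈ K, ∃ k' ∈ K, m * k = k' * m}
  one_mem' k hk := ⟨k, hk, by rw [one_mul, mul_one]⟩
  mul_mem' {m n} hm hn k hk := by
    obtain ⟨k', hk', hnk⟩ := hn k hk
    obtain ⟨k'', hk'', hmk⟩ := hm k' hk'
    exact ⟨k'', hk'', by rw [mul_assoc, hnk, ← mul_assoc, hmk, mul_assoc]⟩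

theorem mem_semiNormalizer_of_conj_mem {a : D} (ha : a ≠ 0) (hconj : ∀ k ∈ K, a * k * a⁻¹ ∈ K) :
    a ∈ K.semiNormalizer :=
  fun k hk => ⟨a * k * a⁻¹, hconj k hk, by rw [inv_mul_cancel_right₀ ha]⟩

variable {K} {M : Submonoid D}

theorem mul_mem_span_of_mem (hM : M ≤ K.semiNormalizer) {m x : D} (hm : m ∈ M)
    (hx : x ∈ span K (M : Set D)) : m * x ∈ span K (M : Set D) := by
  induction hx using Submodule.span_induction with
  | mem y hy => exact subset_span (M.mul_mem hm hy)
  | zero => rw [mul_zero]; exact zero_mem _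
  | add y z _ _ hy hz => rw [mul_add]; exact add_mem hy hz
  | smul k y _ hy =>
    obtain ⟨k', hk', hmk⟩ := hM hm k k.2
    have : m * (k • y) = (⟨k', hk'⟩ : K) • (m * y) := by
      simp only [smul_def, smul_eq_mul, ← mul_assoc, hmk]
    exact this ▸ smul_mem _ _ hy

theorem mul_mem_span (hM : M ≤ K.semiNormalizer) {x y : D} (hx : x ∈ span K (M : Set D))
    (hy : y ∈ span K (M : Set D)) : x * y ∈ span K (M : Set D) := by
  induction hx using Submodule.span_induction with
  | mem m hm => exact mul_mem_span_of_mem hM hm hy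
  | zero => rw [zero_mul]; exact zero_mem _
  | add x z _ _ hx hz => rw [add_mul]; exact add_mem hx hz
  | smul k x _ hx => rw [smul_mul_assoc]; exact smul_mem _ _ hx

variable (K M) in
def spanSubring (hM : M ≤ K.semiNormalizer) : Subring D where
  carrier := span K (M : Set D)
  zero_mem' := zero_mem _
  add_mem' := add_mem
  neg_mem' := neg_mem
  one_mem' := subset_span M.one_mem
  mul_mem' := mul_mem_span hM

theorem coe_spanSubring (hM : M ≤ K.semiNormalizer) :
    (K.spanSubring M hM : Set D) = span K (M : Set D) := rfl

end Subfield

theorem span_subset_span_of_subset {S : Subring D} {K : Subfield D} (hSK : (S : Set D) ⊆ K)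
    {s : Set D} : (span S s : Set D) ⊆ span K s := by
  intro z hz
  induction hz using Submodule.span_induction with
  | mem x hx => exact subset_span hx
  | zero => exact zero_mem _
  | add x y _ _ hx hy => exact add_mem hx hy
  | smul c x _ hx =>
    have : c • x = (⟨c, hSK c.2⟩ : K) • x := rfl
    rw [SetLike.mem_coe, this]
    exact smul_mem _ _ hx

theorem inv_mem_of_finiteDimensional {R : Type*} [DivisionRing R] [Module R D]
    [IsScalarTower R D D] (V : Submodule R D) [FiniteDimensional R V] (hone : 1 ∈ V)
    (hmul : ∀ x ∈ V, ∀ y ∈ V, x * y ∈ V) {z : D} (hz : z ∈ V) (hz0 : z ≠ 0) : z⁻¹ ∈ V := by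
  let f : V →ₗ[R] V := (LinearMap.mulRight R z).restrict fun x hx => hmul x hx z hz
  have hf : Function.Injective f := fun x y hxy =>
    Subtype.ext (mul_right_cancel₀ hz0 (congrArg Subtype.val hxy))
  obtain ⟨x, hx⟩ := LinearMap.injective_iff_surjective.mp hf ⟨1, hone⟩
  have hxz : (x : D) * z = 1 := congrArg Subtype.val hx
  exact eq_inv_of_mul_eq_one_left hxz ▸ x.2

theorem exists_sum_range_of_mem_span_range (K : Subfield D) (v : ℕ → D) {n : ℕ} {z : D}
    (hz : z ∈ span K (Set.range fun i : Fin n => v i)) :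
    ∃ c : ℕ → D, (∀ i, c i ∈ K) ∧ z = ∑ i ∈ Finset.range n, c i * v i := by
  obtain ⟨c, rfl⟩ := (mem_span_range_iff_exists_fun K).mp hz
  refine ⟨fun i => if h : i < n then (c ⟨i, h⟩ : D) else 0, fun i => ?_, ?_⟩
  · dsimp only
    split_ifs
    exacts [(c _).2, K.zero_mem]
  · rw [← Fin.sum_univ_eq_sum_range (fun i => (if h : i < n then (c ⟨i, h⟩ : D) else 0) * v i)]
    simp [Subfield.smul_def]

theorem span_powers_eq_span_pow_lt_natDegree_minpoly {K : Subfield D}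
    (hFK : (Subring.center D : Set D) ⊆ K) {a : D} (ha : IsIntegral (Subring.center D) a) :
    span K (Submonoid.powers a : Set D) =
      span K (Set.range fun i : Fin (minpoly (Subring.center D) a).natDegree => a ^ (i : ℕ)) := by
  refine le_antisymm (span_le.mpr ?_) (span_mono fun _ ⟨i, hi⟩ => ⟨i, hi⟩)
  rintro _ ⟨j, rfl⟩
  exact span_subset_span_of_subset hFK (ha.mem_span_pow ⟨Polynomial.X ^ j, by simp⟩)

end

theorem stmt18_general {D : Type*} [DivisionRing D] (K : Subfield D)
    (hFK : (Subring.center D : Set D) ⊆ (K : Set D))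
    (a : D) (ha : a ≠ 0)
    (hnorm : ∀ k : D, k ∈ K ↔ a * k * a⁻¹ ∈ K)
    (halg : IsAlgebraic (Subring.center D) a)
    (L : Set D)
    (hL : L = {z : D | ∃ (m : ℕ) (c : ℕ → D), (∀ i, c i ∈ K) ∧
      z = ∑ i ∈ Finset.range (m + 1), c i * a ^ i}) :
    (∃ m : ℕ, ∀ z ∈ L, ∃ c : ℕ → D, (∀ i, c i ∈ K) ∧
      z = ∑ i ∈ Finset.range (m + 1), c i * a ^ i) ∧
    ∃ L' : Subring D, (L' : Set D) = L ∧ ∀ z ∈ L', z ≠ 0 → z⁻¹ ∈ L' := by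
  have hint : IsIntegral (Subring.center D) a := halg.isIntegral
  have hspan := span_powers_eq_span_pow_lt_natDegree_minpoly hFK hint
  obtain ⟨m, hm⟩ := Nat.exists_eq_add_one.mpr (minpoly.natDegree_pos hint)
  have haK : Submonoid.powers a ≤ K.semiNormalizer :=
    Submonoid.powers_le.mpr (K.mem_semiNormalizer_of_conj_mem ha fun k => (hnorm k).mp)
  let S := K.spanSubring _ haK
  have hrep (z : D) (hz : z ∈ S) : ∃ c : ℕ → D, (∀ i, c i ∈ K) ∧
      z = ∑ i ∈ Finset.range (m + 1), c i * a ^ i := by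
    rw [← SetLike.mem_coe, K.coe_spanSubring, SetLike.mem_coe, hspan, hm] at hz
    exact exists_sum_range_of_mem_span_range K (a ^ ·) hz
  have hLS : L ⊆ S := by
    rw [hL]
    rintro _ ⟨-, c, hc, rfl⟩
    exact sum_mem fun i _ => Submodule.smul_mem (Submodule.span K _) ⟨c i, hc i⟩
      (Submodule.subset_span (pow_mem (Submonoid.mem_powers a) i))
  have : FiniteDimensional K (Submodule.span K (Submonoid.powers a : Set D)) :=
    hspan ▸ FiniteDimensional.span_of_finite K (Set.finite_range _)
  refine ⟨⟨m, fun z hz => hrep z (hLS hz)⟩, S, ?_, fun z hz hz0 => ?_⟩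
  · exact subset_antisymm (fun z hz => hL ▸ ⟨m, hrep z hz⟩) hLS
  · exact inv_mem_of_finiteDimensional _ S.one_mem (fun x hx y hy => S.mul_mem hx hy) hz hz0

/-- Let `D` be a division ring with center `F`, `K` a (commutative) subfield of `D`
containing `F`, and `a ∈ D*` with `a K a⁻¹ = K` and `a` algebraic over `F`.  Then
`L = Σ_i K aⁱ` is spanned by finitely many powers of `a` (so is a finite-dimensional
left `K`-vector space) and is a division subring of `D`. -/
theorem stmt18 {D : Type*} [DivisionRing D] (K : Subfield D)
    (hKcomm : ∀ x ∈ K, ∀ y ∈ K, x * y = y * x)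
    (hFK : (Subring.center D : Set D) ⊆ (K : Set D))
    (a : D) (ha : a ≠ 0)
    (hnorm : ∀ k : D, k ∈ K ↔ a * k * a⁻¹ ∈ K)
    (halg : IsAlgebraic (Subring.center D) a)
    (L : Set D)
    (hL : L = {z : D | ∃ (m : ℕ) (c : ℕ → D), (∀ i, c i ∈ K) ∧
      z = ∑ i ∈ Finset.range (m + 1), c i * a ^ i}) :
    (∃ m : ℕ, ∀ z ∈ L, ∃ c : ℕ → D, (∀ i, c i ∈ K) ∧
      z = ∑ i ∈ Finset.range (m + 1), c i * a ^ i) ∧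
    ∃ L' : Subring D, (L' : Set D) = L ∧ ∀ z ∈ L', z ≠ 0 → z⁻¹ ∈ L' :=
  stmt18_general K hFK a ha hnorm halg L hL
end

section
/- Let K be a field, σ an automorphism of K, and K[t,σ] the skew polynomial ring. Let D be a division ring containing K as a subfield and a ∈ D* with a b a⁻¹ = σ(b) for all b ∈ K. Consider the ring homomorphism Φ : K[t,σ] → D determined by Φ|_K = id and Φ(t) = a. If ker Φ ≠ 0, then ker Φ is generated by a single polynomial f(t) and the image K[a] = Φ(K[t,σ]) is a division subring of D which is finite-dimensional as a left K-vector space. -/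
/-!
Division with remainder on the right: a nonzero kernel element `g` of minimal degree `n`, with
leading term `ι c * t ^ n`, removes the top term `ι d * t ^ s` of any `z` when
`ι (d * ((σ ^ (s - n)) c)⁻¹) * t ^ (s - n) * g` is subtracted, because
`t ^ k * ι c = ι ((σ ^ k) c) * t ^ k`. Hence every element is `q * g` plus something of degree
`< n`; in the kernel that remainder vanishes by minimality, and under `Φ` it shows that `K[a]`
is spanned over `K` by `1, a, …, a ^ n`. Right multiplication by a nonzero `z ∈ K[a]` is a left
`K`-linear injective endomorphism of this finite-dimensional space, hence surjective, so
`z⁻¹ ∈ K[a]`.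
-/

open Finset

section Degree

variable {K P : Type*} [Ring K] [Ring P] (ι : K →+* P) (t : P)

def degreeLT (m : ℕ) : AddSubgroup P where
  carrier := {z | ∃ c : ℕ → K, z = ∑ i ∈ range m, ι (c i) * t ^ i}
  add_mem' := by
    rintro _ _ ⟨c, rfl⟩ ⟨d, rfl⟩
    exact ⟨c + d, by simp only [Pi.add_apply, map_add, add_mul, sum_add_distrib]⟩
  zero_mem' := ⟨0, by simp⟩
  neg_mem' := by
    rintro _ ⟨c, rfl⟩
    exact ⟨-c, by simp only [Pi.neg_apply, map_neg, neg_mul, sum_neg_distrib]⟩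

variable {ι t}

theorem degreeLT_zero : degreeLT ι t 0 = ⊥ :=
  (AddSubgroup.eq_bot_iff_forall _).2 fun _ ⟨_, hz⟩ => by simpa using hz

theorem mem_degreeLT_succ {m : ℕ} {z : P} :
    z ∈ degreeLT ι t (m + 1) ↔ ∃ d : K, ∃ z' ∈ degreeLT ι t m, z = z' + ι d * t ^ m := by
  constructor
  · rintro ⟨c, rfl⟩
    exact ⟨c m, _, ⟨c, rfl⟩, sum_range_succ _ _⟩
  · rintro ⟨d, _, ⟨c, rfl⟩, rfl⟩
    refine ⟨Function.update c m d, ?_⟩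
    rw [sum_range_succ, Function.update_self]
    congr 1
    exact sum_congr rfl fun i hi =>
      by rw [Function.update_of_ne (mem_range.1 hi).ne]

theorem degreeLT_mono : Monotone (degreeLT ι t) :=
  monotone_nat_of_le_succ fun _ z hz => mem_degreeLT_succ.2 ⟨0, z, hz, by simp⟩

theorem monomial_mem_degreeLT {i m : ℕ} (hi : i < m) (d : K) :
    ι d * t ^ i ∈ degreeLT ι t m :=
  degreeLT_mono hi (mem_degreeLT_succ.2 ⟨d, 0, zero_mem _, (zero_add _).symm⟩)

theorem mul_mem_degreeLT {m : ℕ} {z : P} (e : K) (hz : z ∈ degreeLT ι t m) :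
    ι e * z ∈ degreeLT ι t m := by
  obtain ⟨c, rfl⟩ := hz
  exact ⟨fun i => e * c i, by simp only [mul_sum, map_mul, mul_assoc]⟩

theorem pow_mul_eq_mul_pow {σ : K ≃+* K} (hskew : ∀ b : K, t * ι b = ι (σ b) * t) (k : ℕ)
    (b : K) : t ^ k * ι b = ι ((σ ^ k) b) * t ^ k := by
  induction k generalizing b with
  | zero => simp
  | succ k ih =>
    rw [pow_succ, mul_assoc, hskew, ← mul_assoc, ih, mul_assoc, ← pow_succ, pow_succ σ]
    rfl

theorem pow_mul_mem_degreeLT {σ : K ≃+* K} (hskew : ∀ b : K, t * ι b = ι (σ b) * t)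
    {m : ℕ} {z : P} (k : ℕ) (hz : z ∈ degreeLT ι t m) : t ^ k * z ∈ degreeLT ι t (k + m) := by
  obtain ⟨c, rfl⟩ := hz
  rw [mul_sum]
  refine AddSubgroup.sum_mem _ fun i hi => ?_
  rw [← mul_assoc, pow_mul_eq_mul_pow hskew, mul_assoc, ← pow_add]
  exact monomial_mem_degreeLT (by simpa using hi) _

end Degree

section Division

variable {K P : Type*} [DivisionRing K] [Ring P] {ι : K →+* P} {t : P} {σ : K ≃+* K}

theorem exists_sub_mul_mem_degreeLT (hskew : ∀ b : K, t * ι b = ι (σ b) * t)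
    (hspan : ∀ z : P, ∃ m, z ∈ degreeLT ι t m) {n : ℕ} {c : K} {g' : P} (hc : c ≠ 0)
    (hg' : g' ∈ degreeLT ι t n) (z : P) :
    ∃ q : P, z - q * (g' + ι c * t ^ n) ∈ degreeLT ι t n := by
  obtain ⟨m, hz⟩ := hspan z
  induction m generalizing z with
  | zero => exact ⟨0, by simpa using degreeLT_mono (Nat.zero_le n) hz⟩
  | succ s ih =>
    rcases le_or_gt (s + 1) n with hsn | hns
    · exact ⟨0, by simpa using degreeLT_mono hsn hz⟩
    obtain ⟨d, z', hz', rfl⟩ := mem_degreeLT_succ.1 hz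
    obtain ⟨k, rfl⟩ : ∃ k, s = k + n := ⟨s - n, by omega⟩
    have hσc : (σ ^ k) c ≠ 0 := (map_ne_zero _).2 hc
    set e := d * ((σ ^ k) c)⁻¹
    have hlead : ι e * t ^ k * (ι c * t ^ n) = ι d * t ^ (k + n) := by
      rw [mul_assoc, ← mul_assoc (t ^ k), pow_mul_eq_mul_pow hskew, mul_assoc, ← pow_add,
        ← mul_assoc, ← map_mul, inv_mul_cancel_right₀ hσc]
    have hreduced : z' + ι d * t ^ (k + n) - ι e * t ^ k * (g' + ι c * t ^ n) ∈
        degreeLT ι t (k + n) := by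
      rw [mul_add, hlead, add_sub_add_right_eq_sub, mul_assoc]
      exact sub_mem hz' (mul_mem_degreeLT e (pow_mul_mem_degreeLT hskew k hg'))
    obtain ⟨q, hq⟩ := ih _ hreduced
    exact ⟨ι e * t ^ k + q, by rwa [add_mul, ← sub_sub]⟩

theorem exists_minimal_degree_mem {I : Set P} (hI : ∃ z ∈ I, z ≠ 0)
    (hspan : ∀ z : P, ∃ m, z ∈ degreeLT ι t m) :
    ∃ (n : ℕ) (c : K) (g' : P), c ≠ 0 ∧ g' ∈ degreeLT ι t n ∧ g' + ι c * t ^ n ∈ I ∧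
      ∀ z ∈ I, z ∈ degreeLT ι t n → z = 0 := by
  classical
  have hex : ∃ m, ∃ z ∈ I, z ≠ 0 ∧ z ∈ degreeLT ι t m := by
    obtain ⟨z, hzI, hz0⟩ := hI
    obtain ⟨m, hm⟩ := hspan z
    exact ⟨m, z, hzI, hz0, hm⟩
  have hmin : ∀ m < Nat.find hex, ∀ z ∈ I, z ∈ degreeLT ι t m → z = 0 := fun m hm z hzI hz =>
    by_contra fun hz0 => Nat.find_min hex hm ⟨z, hzI, hz0, hz⟩
  obtain ⟨g, hgI, hg0, hg⟩ := Nat.find_spec hex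
  obtain ⟨n, hn⟩ : ∃ n, Nat.find hex = n + 1 := by
    refine Nat.exists_eq_add_one.2 (Nat.pos_of_ne_zero fun h => hg0 ?_)
    rw [h, degreeLT_zero] at hg
    exact hg
  rw [hn] at hg hmin
  obtain ⟨c, g', hg', rfl⟩ := mem_degreeLT_succ.1 hg
  refine ⟨n, c, g', fun hc => hg0 ?_, hg', hgI, hmin n n.lt_succ_self⟩
  refine hmin n n.lt_succ_self _ hgI ?_
  simpa [hc] using hg'

end Division

theorem Ideal.mem_iff_exists_eq_mul_of_minimal {K P : Type*} [Ring K] [Ring P]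
    {ι : K →+* P} {t : P} {I : Ideal P} {n : ℕ} {g : P} (hgI : g ∈ I)
    (hdiv : ∀ z : P, ∃ q : P, z - q * g ∈ degreeLT ι t n)
    (hmin : ∀ z ∈ I, z ∈ degreeLT ι t n → z = 0) (z : P) :
    z ∈ I ↔ ∃ q : P, z = q * g := by
  constructor
  · intro hz
    obtain ⟨q, hq⟩ := hdiv z
    exact ⟨q, sub_eq_zero.1 (hmin _ (sub_mem hz (I.mul_mem_left q hgI)) hq)⟩
  · rintro ⟨q, rfl⟩
    exact I.mul_mem_left q hgI

theorem Subring.inv_mem_of_left_span {K D : Type*} [DivisionRing K] [DivisionRing D]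
    (f : K →+* D) (S : Subring D) (hfS : ∀ c, f c ∈ S) (m : ℕ) (v : ℕ → D)
    (hS : ∀ z ∈ S, ∃ c : ℕ → K, z = ∑ i ∈ range m, f (c i) * v i)
    {z : D} (hz : z ∈ S) (hz0 : z ≠ 0) : z⁻¹ ∈ S := by
  let : Module K D := Module.compHom D f
  let T : Submodule K D :=
    { carrier := S
      add_mem' := S.add_mem
      zero_mem' := S.zero_mem
      smul_mem' := fun c _ hx => S.mul_mem (hfS c) hx }
  have hTspan : T ≤ Submodule.span K (v '' Set.Iio m) := by
    intro x hx
    obtain ⟨c, rfl⟩ := hS x hx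
    exact Submodule.sum_mem _ fun i hi =>
      Submodule.smul_mem _ (c i) (Submodule.subset_span ⟨i, by simpa using hi, rfl⟩)
  have : FiniteDimensional K (Submodule.span K (v '' Set.Iio m)) :=
    FiniteDimensional.span_of_finite K ((Set.finite_Iio m).image v)
  have : FiniteDimensional K T := Submodule.finiteDimensional_of_le hTspan
  let mulRight : T →ₗ[K] T :=
    { toFun := fun x => ⟨x * z, S.mul_mem x.2 hz⟩
      map_add' := fun x y => Subtype.ext (add_mul _ _ _)
      map_smul' := fun c x => Subtype.ext (mul_assoc (f c) x z) }
  have hinj : Function.Injective mulRight := fun x y hxy =>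
    Subtype.ext (mul_right_cancel₀ hz0 (congrArg Subtype.val hxy))
  obtain ⟨y, hy⟩ := LinearMap.injective_iff_surjective.1 hinj ⟨1, S.one_mem⟩
  rw [inv_eq_of_mul_eq_one_left (congrArg Subtype.val hy)]
  exact y.2

theorem stmt19_general {K P D : Type*} [Field K] [Ring P] [DivisionRing D] (σ : K ≃+* K)
    (ι : K →+* P) (t : P)
    (hskewP : ∀ b : K, t * ι b = ι (σ b) * t)
    (hspan : ∀ z : P, ∃ (m : ℕ) (c : ℕ → K),
      z = ∑ i ∈ Finset.range (m + 1), ι (c i) * t ^ i)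
    (f : K →+* D)
    (a : D)
    (Φ : P →+* D) (hΦι : ∀ b : K, Φ (ι b) = f b) (hΦt : Φ t = a)
    (hker : RingHom.ker Φ ≠ ⊥) :
    (∃ g : P, ∀ z : P, Φ z = 0 ↔ ∃ q : P, z = q * g) ∧
    (∀ z ∈ Φ.range, z ≠ 0 → z⁻¹ ∈ Φ.range) ∧
    ∃ m : ℕ, ∀ z ∈ Φ.range, ∃ c : ℕ → K,
      z = ∑ i ∈ Finset.range (m + 1), f (c i) * a ^ i := by
  have hspan' : ∀ z, ∃ m, z ∈ degreeLT ι t m := fun z =>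
    let ⟨m, hm⟩ := hspan z; ⟨m + 1, hm⟩
  obtain ⟨n, c, g', hc, hg', hgker, hmin⟩ :=
    exists_minimal_degree_mem (Submodule.exists_mem_ne_zero_of_ne_bot hker) hspan'
  have hdiv := exists_sub_mul_mem_degreeLT hskewP hspan' hc hg'
  have himage : ∀ z ∈ Φ.range, ∃ d : ℕ → K, z = ∑ i ∈ range (n + 1), f (d i) * a ^ i := by
    rintro _ ⟨z, rfl⟩
    obtain ⟨q, hq⟩ := hdiv z
    obtain ⟨d, hd⟩ := degreeLT_mono n.le_succ hq
    refine ⟨d, ?_⟩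
    calc Φ z = Φ (z - q * (g' + ι c * t ^ n)) := by
          rw [map_sub, map_mul, RingHom.mem_ker.1 hgker, mul_zero, sub_zero]
      _ = _ := by simp only [hd, map_sum, map_mul, map_pow, hΦι, hΦt]
  refine ⟨⟨_, Ideal.mem_iff_exists_eq_mul_of_minimal hgker hdiv hmin⟩, fun z hz hz0 => ?_,
    n, himage⟩
  exact Subring.inv_mem_of_left_span f Φ.range (fun b => ⟨ι b, hΦι b⟩) (n + 1) (a ^ ·)
    himage hz hz0

/-- Abstract setting: `P` is the skew polynomial ring `K[t,σ]` (a ring containing `K`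
via `ι`, with `t` satisfying the skew relation and the powers of `t` forming a left
`K`-basis), `D` is a division ring containing `K` via `f = Φ ∘ ι`, `a = Φ t`
satisfies `a b a⁻¹ = σ(b)` on `K`, and `Φ : P →+* D` extends `f` with `Φ t = a`.
If `ker Φ ≠ 0`, then `ker Φ` is generated (as a left ideal) by a single polynomial,
and the image `K[a] = Φ(P)` is a division subring of `D` which is finite-dimensional
as a left `K`-vector space. -/
theorem stmt19 {K P D : Type*} [Field K] [Ring P] [DivisionRing D] (σ : K ≃+* K)
    (ι : K →+* P) (hι : Function.Injective ι) (t : P)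
    (hskewP : ∀ b : K, t * ι b = ι (σ b) * t)
    (hspan : ∀ z : P, ∃ (m : ℕ) (c : ℕ → K),
      z = ∑ i ∈ Finset.range (m + 1), ι (c i) * t ^ i)
    (hind : ∀ (m : ℕ) (c : ℕ → K),
      (∑ i ∈ Finset.range m, ι (c i) * t ^ i) = 0 → ∀ i < m, c i = 0)
    (f : K →+* D) (hf : Function.Injective f)
    (a : D) (ha : a ≠ 0) (hconj : ∀ b : K, a * f b * a⁻¹ = f (σ b))
    (Φ : P →+* D) (hΦι : ∀ b : K, Φ (ι b) = f b) (hΦt : Φ t = a)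
    (hker : RingHom.ker Φ ≠ ⊥) :
    (∃ g : P, ∀ z : P, Φ z = 0 ↔ ∃ q : P, z = q * g) ∧
    (∀ z ∈ Φ.range, z ≠ 0 → z⁻¹ ∈ Φ.range) ∧
    ∃ m : ℕ, ∀ z ∈ Φ.range, ∃ c : ℕ → K,
      z = ∑ i ∈ Finset.range (m + 1), f (c i) * a ^ i :=
  stmt19_general σ ι t hskewP hspan f a Φ hΦι hΦt hker
end
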